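/- Let G = (V,E) be a finite simple graph, let k be a natural number, and let lb be a natural number such that θ(G,k) ≥ lb. If u ∈ V is a vertex whose degree d(u) is at most lb − 2, then θ(G,k) = θ(G[V ∖ {u}], k). -/

import Mathlib

/-!
Deleting `u` never increases a clique number, so `θ(G - u, k) ≤ θ(G, k)`. Conversely, for
`S ⊆ V ∖ {u}` with `|S| ≤ k`, the graph `G - S` has clique number at least
`θ(G, k) ≥ lb ≥ d(u) + 2`, while a clique through `u` has at most `d(u) + 1` vertices; so a
maximum clique of `G - S` avoids `u`, and `ω(G - S - u) = ω(G - S) ≥ θ(G, k)`.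
-/

open SimpleGraph

/-- `theta G k` is the minimum, over all vertex subsets `S` with `|S| ≤ k`, of the
clique number of the subgraph of `G` induced on the complement of `S`. -/
noncomputable def theta {V : Type*} (G : SimpleGraph V) (k : ℕ) : ℕ :=
  sInf {m | ∃ S : Finset V, S.card ≤ k ∧ (G.induce ((↑S : Set V)ᶜ)).cliqueNum = m}

open Finset

theorem Finset.card_subtype_of_forall {α : Type*} {p : α → Prop} [DecidablePred p]
    {s : Finset α} (h : ∀ x ∈ s, p x) : #(s.subtype p) = #s := by
  rw [card_subtype, filter_true_of_mem h]

namespace SimpleGraph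

variable {V : Type*} {G : SimpleGraph V}

variable (G) in
theorem exists_isNClique_cliqueNum_induce (A : Set V) :
    ∃ t : Finset V, ↑t ⊆ A ∧ G.IsNClique (G.induce A).cliqueNum t := by
  obtain ⟨s, hs⟩ := (G.induce A).exists_isNClique_cliqueNum
  refine ⟨s.map (.subtype _), by simp, ?_, (card_map _).trans hs.card_eq⟩
  simpa using isClique_induce_iff.mp hs.isClique

theorem IsClique.induce_subtype {A : Set V} [DecidablePred (· ∈ A)] {t : Finset V}
    (ht : G.IsClique t) : (G.induce A).IsClique (t.subtype (· ∈ A) : Set A) := by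
  rw [isClique_induce_iff]
  exact ht.subset (by rintro _ ⟨x, hx, rfl⟩; simpa using hx)

variable [Finite V]

theorem IsClique.card_le_cliqueNum_induce {A : Set V} {t : Finset V} (hA : ↑t ⊆ A)
    (ht : G.IsClique t) : #t ≤ (G.induce A).cliqueNum := by
  classical
  rw [← card_subtype_of_forall fun x hx => hA hx]
  exact ht.induce_subtype.card_le_cliqueNum

theorem IsClique.card_le_ncard_neighborSet_add_one {t : Finset V} {u : V} (ht : G.IsClique t)
    (hu : u ∈ t) : #t ≤ (G.neighborSet u).ncard + 1 := by
  classical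
  have hsub : ↑(t.erase u) ⊆ G.neighborSet u := fun x hx =>
    ht hu (mem_of_mem_erase hx) (ne_of_mem_erase hx).symm
  rw [← card_erase_add_one hu, ← Set.ncard_coe_finset]
  exact Nat.add_le_add_right (Set.ncard_le_ncard hsub) 1

variable (G)

theorem cliqueNum_induce_mono {A B : Set V} (h : A ⊆ B) :
    (G.induce A).cliqueNum ≤ (G.induce B).cliqueNum := by
  obtain ⟨t, htA, ht⟩ := G.exists_isNClique_cliqueNum_induce A
  rw [← ht.card_eq]
  exact ht.isClique.card_le_cliqueNum_induce (htA.trans h)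

theorem cliqueNum_induce_le_max (A : Set V) (u : V) :
    (G.induce A).cliqueNum ≤
      max (G.induce (A \ {u})).cliqueNum ((G.neighborSet u).ncard + 1) := by
  obtain ⟨t, htA, ht⟩ := G.exists_isNClique_cliqueNum_induce A
  rw [← ht.card_eq]
  by_cases hu : u ∈ t
  · exact le_max_of_le_right (ht.isClique.card_le_ncard_neighborSet_add_one hu)
  · refine le_max_of_le_left (ht.isClique.card_le_cliqueNum_induce fun x hx => ⟨htA hx, ?_⟩)
    rintro rfl
    exact hu hx

theorem cliqueNum_induce_induce (A : Set V) (B : Set A) :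
    ((G.induce A).induce B).cliqueNum = (G.induce (Subtype.val '' B)).cliqueNum := by
  classical
  apply le_antisymm
  · obtain ⟨t, htB, ht⟩ := (G.induce A).exists_isNClique_cliqueNum_induce B
    rw [← ht.card_eq, ← card_map (.subtype _)]
    refine IsClique.card_le_cliqueNum_induce ?_ ?_ <;>
      simp only [coe_map, Function.Embedding.coe_subtype]
    exacts [Set.image_mono htB, isClique_induce_iff.mp ht.isClique]
  · obtain ⟨t, htB, ht⟩ := G.exists_isNClique_cliqueNum_induce (Subtype.val '' B)
    have htA : ↑t ⊆ A := htB.trans (by simp)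
    rw [← ht.card_eq, ← card_subtype_of_forall fun x hx => htA hx]
    refine ht.isClique.induce_subtype.card_le_cliqueNum_induce fun x hx => ?_
    obtain ⟨y, hy, hyx⟩ := htB (mem_subtype.mp hx)
    rwa [← Subtype.ext hyx]

end SimpleGraph

section Theta

variable {V W : Type*} (G : SimpleGraph V) (k : ℕ)

theorem theta_le {S : Finset V} (hS : #S ≤ k) : theta G k ≤ (G.induce (↑S)ᶜ).cliqueNum :=
  Nat.sInf_le ⟨S, hS, rfl⟩

theorem exists_cliqueNum_eq_theta :
    ∃ S : Finset V, #S ≤ k ∧ (G.induce (↑S)ᶜ).cliqueNum = theta G k := by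
  have hne : {m | ∃ S : Finset V, #S ≤ k ∧ (G.induce (↑S)ᶜ).cliqueNum = m}.Nonempty :=
    ⟨_, ∅, by simp, rfl⟩
  exact Nat.sInf_mem hne

theorem theta_le_theta {H : SimpleGraph W}
    (h : ∀ S : Finset W, #S ≤ k →
      ∃ T : Finset V, #T ≤ k ∧ (G.induce (↑T)ᶜ).cliqueNum ≤ (H.induce (↑S)ᶜ).cliqueNum) :
    theta G k ≤ theta H k := by
  obtain ⟨S, hS, hSθ⟩ := exists_cliqueNum_eq_theta H k
  obtain ⟨T, hT, hTS⟩ := h S hS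
  exact hSθ ▸ (theta_le G k hT).trans hTS

end Theta

theorem degree_reduction {V : Type*} [Fintype V] (G : SimpleGraph V) (k lb : ℕ)
    (hlb : lb ≤ theta G k) (u : V)
    (h : ((G.neighborSet u).ncard : ℤ) ≤ (lb : ℤ) - 2) :
    theta G k = theta (G.induce ({u}ᶜ : Set V)) k := by
  classical
  refine le_antisymm (theta_le_theta G k fun S hS => ?_) (theta_le_theta _ k fun S hS => ?_)
  · set T := S.map (.subtype _)
    have hT : #T ≤ k := by rwa [card_map]
    have hST : Subtype.val '' ((↑S)ᶜ : Set ({u}ᶜ : Set V)) = (↑T)ᶜ \ {u} := by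
      ext x
      simp [T, and_comm]
    refine ⟨T, hT, ?_⟩
    rw [G.cliqueNum_induce_induce, hST]
    have hθT := theta_le G k hT
    have hmax := G.cliqueNum_induce_le_max (↑T)ᶜ u
    omega
  · refine ⟨S.subtype (· ∈ ({u}ᶜ : Set V)), ?_, ?_⟩
    · rw [card_subtype]
      exact (card_filter_le _ _).trans hS
    · rw [G.cliqueNum_induce_induce]
      exact G.cliqueNum_induce_mono (by rintro _ ⟨x, hx, rfl⟩; simpa using hx)
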